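/- Let N ≥ 1, E a real normed vector space, f : E → E → E, and τ : Fin N → ℝ. Suppose x : Fin N → ℝ → E is a solution of the inhomogeneous ring system: each x j is differentiable and deriv (x j) t = f (x j t) (x (j+1) (t − τ j)) for all t ∈ ℝ (indices modulo N). Then there exist shifts η : Fin N → ℝ such that the functions y j t := x j (t + η j) solve the homogeneous ring system with the single delay τ̄ = (∑_k τ k) / N, i.e. deriv (y j) t = f (y j t) (y (j+1) (t − τ̄)) for all j and all t ∈ ℝ. -/

import Mathlib

/-!
Shifting time in node `j` by `η j` turns the delay on the link `j ← j + 1` into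
`τ j + η (j + 1) - η j`. All of these equal `τ̄` exactly when `η (j + 1) - η j = τ̄ - τ j`
around the ring, which is solvable since these increments sum to `N τ̄ - ∑ τ = 0`;
`η` is then given by their partial sums.
-/

open Finset

theorem Fin.partialSum_last {G : Type*} [AddCommMonoid G] {n : ℕ} (δ : Fin n → G) :
    Fin.partialSum δ (Fin.last n) = ∑ i, δ i := by
  rw [Fin.partialSum, Fin.val_last, List.take_of_length_le (List.length_ofFn ▸ le_rfl),
    List.sum_ofFn]

theorem Fin.exists_add_one_eq_add_of_sum_eq_zero {G : Type*} [AddCommMonoid G] {N : ℕ}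
    [NeZero N] (δ : Fin N → G) (hδ : ∑ j, δ j = 0) :
    ∃ η : Fin N → G, ∀ j, η (j + 1) = η j + δ j := by
  obtain ⟨n, rfl⟩ := Nat.exists_eq_succ_of_ne_zero (NeZero.ne N)
  refine ⟨fun j => Fin.partialSum δ j.castSucc, fun j => ?_⟩
  dsimp only
  cases j using Fin.lastCases with
  | last =>
    rw [Fin.last_add_one, Fin.castSucc_zero, Fin.partialSum_zero, ← Fin.partialSum_succ,
      Fin.succ_last, Fin.partialSum_last, hδ]
  | cast i =>
    rw [Fin.coeSucc_eq_succ, ← Fin.succ_castSucc, Fin.partialSum_succ]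

section RingSystem

variable {N : ℕ} [NeZero N] {E : Type*} [NormedAddCommGroup E] [NormedSpace ℝ E]

def IsRingSolution (f : E → E → E) (τ : Fin N → ℝ) (x : Fin N → ℝ → E) : Prop :=
  ∀ j t, deriv (x j) t = f (x j t) (x (j + 1) (t - τ j))

theorem IsRingSolution.timeShift {f : E → E → E} {τ : Fin N → ℝ} {x : Fin N → ℝ → E}
    (hx : IsRingSolution f τ x) (η : Fin N → ℝ) :
    IsRingSolution f (fun j => τ j + η (j + 1) - η j) (fun j t => x j (t + η j)) := by
  intro j t
  rw [deriv_comp_add_const, hx]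
  congr 2
  ring

end RingSystem

theorem ring_reduction_to_mean_delay_general (N : ℕ) [NeZero N]
    {E : Type*} [NormedAddCommGroup E] [NormedSpace ℝ E]
    (f : E → E → E) (τ : Fin N → ℝ) (x : Fin N → ℝ → E)
    (hsol : ∀ j, ∀ t : ℝ, deriv (x j) t = f (x j t) (x (j + 1) (t - τ j))) :
    ∃ η : Fin N → ℝ, ∀ y : Fin N → ℝ → E,
      (∀ j, ∀ t : ℝ, y j t = x j (t + η j)) →
        ∀ j, ∀ t : ℝ,
          deriv (y j) t = f (y j t) (y (j + 1) (t - (∑ k : Fin N, τ k) / N)) := by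
  set τbar : ℝ := (∑ k : Fin N, τ k) / N
  have hbalanced : ∑ j, (τbar - τ j) = 0 := by
    rw [sum_sub_distrib, sum_const, card_univ, Fintype.card_fin, nsmul_eq_mul,
      mul_div_cancel₀ _ (Nat.cast_ne_zero.mpr (NeZero.ne N)), sub_self]
  obtain ⟨η, hη⟩ := Fin.exists_add_one_eq_add_of_sum_eq_zero _ hbalanced
  refine ⟨η, fun y hy => ?_⟩
  obtain rfl : y = fun j t => x j (t + η j) := funext fun j => funext (hy j)
  suffices IsRingSolution f (fun _ => τbar) fun j t => x j (t + η j) from this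
  convert IsRingSolution.timeShift hsol η using 2
  rw [hη]
  ring

/-- **Reduction of an inhomogeneous unidirectional ring to a homogeneous one.**
If `x` solves the ring system `ẋ_j(t) = f(x_j(t), x_{j+1}(t − τ_j))` with
inhomogeneous delays, then there exist time shifts `η` such that
`y_j(t) = x_j(t + η_j)` solves the ring system with the single (average) delay
`τ̄ = (∑ τ_k) / N`. -/
theorem ring_reduction_to_mean_delay (N : ℕ) [NeZero N]
    {E : Type*} [NormedAddCommGroup E] [NormedSpace ℝ E]
    (f : E → E → E) (τ : Fin N → ℝ) (x : Fin N → ℝ → E)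
    (hdiff : ∀ j, Differentiable ℝ (x j))
    (hsol : ∀ j, ∀ t : ℝ, deriv (x j) t = f (x j t) (x (j + 1) (t - τ j))) :
    ∃ η : Fin N → ℝ, ∀ y : Fin N → ℝ → E,
      (∀ j, ∀ t : ℝ, y j t = x j (t + η j)) →
        ∀ j, ∀ t : ℝ,
          deriv (y j) t = f (y j t) (y (j + 1) (t - (∑ k : Fin N, τ k) / N)) :=
  ring_reduction_to_mean_delay_general N f τ x hsol
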